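/- Let d ≥ 2 and let W₁, …, W_{d²−1} ∈ Matrix (Fin d) (Fin d) ℂ be unitary matrices with Tr(Wⱼ) = 0 for all j and Tr(Wⱼᴴ W_k) = 0 for all j ≠ k. Then for every unit vector ψ ∈ ℂ^d: (2/(d²−1)) ∑_{j=1}^{d²−1} √(1 − |⟨ψ, Wⱼ ψ⟩|²) ≤ 2 √(d/(d+1)). (This bounds the NE norm of the difference of the corresponding flagged channels with Kraus operators 1/√(d²−1) and Wⱼ/√(d²−1).) -/

import Mathlib

open Matrix Kronecker BigOperators ComplexOrder

noncomputable def traceNorm {n : Type*} [Fintype n] [DecidableEq n] (A : Matrix n n ℂ) : ℝ :=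
  ((((Matrix.posSemidef_conjTranspose_mul_self A).1.eigenvectorUnitary : Matrix n n ℂ) *
    Matrix.diagonal ((fun x : ℝ => (x : ℂ)) ∘ (Real.sqrt ·) ∘ (Matrix.posSemidef_conjTranspose_mul_self A).1.eigenvalues) *
    (star (Matrix.posSemidef_conjTranspose_mul_self A).1.eigenvectorUnitary : Matrix n n ℂ)).trace).re

def IsDensity {n : Type*} [Fintype n] (ρ : Matrix n n ℂ) : Prop :=
  ρ.PosSemidef ∧ ρ.trace = 1

def tensorId {X Y Z : Type*} (Φ : Matrix X X ℂ → Matrix Y Y ℂ)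
    (ρ : Matrix (X × Z) (X × Z) ℂ) : Matrix (Y × Z) (Y × Z) ℂ :=
  Matrix.of fun p q => Φ (Matrix.of fun x x' => ρ (x, p.2) (x', q.2)) p.1 q.1

noncomputable def ChoiMatrix {X Y : Type*} [Fintype X] [DecidableEq X] [Fintype Y]
    (Φ : Matrix X X ℂ → Matrix Y Y ℂ) : Matrix (Y × X) (Y × X) ℂ :=
  ∑ j : X, ∑ k : X, (Φ (Matrix.single j k 1)) ⊗ₖ (Matrix.single j k 1)

def IsChannel {X Y : Type*} [Fintype X] [DecidableEq X] [Fintype Y]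
    (Φ : Matrix X X ℂ →ₗ[ℂ] Matrix Y Y ℂ) : Prop :=
  (∀ M, (Φ M).trace = M.trace) ∧ (ChoiMatrix (⇑Φ)).PosSemidef

def SeparableOp {Y Z : Type*} [Fintype Y] [Fintype Z]
    (P : Matrix (Y × Z) (Y × Z) ℂ) : Prop :=
  ∃ (N : ℕ) (Q : Fin N → Matrix Y Y ℂ) (R : Fin N → Matrix Z Z ℂ),
    (∀ i, (Q i).PosSemidef) ∧ (∀ i, (R i).PosSemidef) ∧ P = ∑ i, Q i ⊗ₖ R i

def partialTranspose {Y Z : Type*} (M : Matrix (Y × Z) (Y × Z) ℂ) :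
    Matrix (Y × Z) (Y × Z) ℂ :=
  Matrix.of fun p q => M (p.1, q.2) (q.1, p.2)

def IsPPT {Y Z : Type*} [Fintype Y] [Fintype Z] (M : Matrix (Y × Z) (Y × Z) ℂ) : Prop :=
  M.PosSemidef ∧ (partialTranspose M).PosSemidef

/-! The matrices `1, W₁, …, W_{d²-1}` are pairwise orthogonal for the Hilbert–Schmidt inner
product, each of squared norm `d`, and there are `d²` of them, so they form an orthogonal basis of
the matrix space. Parseval's identity for the projection `ψψᴴ`, whose coefficients are
`⟨ψ, Wⱼψ⟩` up to conjugation, gives `1 + ∑ⱼ |⟨ψ, Wⱼψ⟩|² = d`; Cauchy–Schwarz then bounds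
`∑ⱼ √(1 - |⟨ψ, Wⱼψ⟩|²)` by `√((d² - 1)(d² - d))`. -/

open scoped InnerProductSpace

section Parseval
variable {𝕜 E ι : Type*} [RCLike 𝕜] [NormedAddCommGroup E] [InnerProductSpace 𝕜 E]
  [FiniteDimensional 𝕜 E] [Fintype ι]

theorem Orthonormal.sum_sq_norm_inner_of_card_eq_finrank {e : ι → E} (he : Orthonormal 𝕜 e)
    (hcard : Fintype.card ι = Module.finrank 𝕜 E) (x : E) :
    ∑ i, ‖⟪e i, x⟫_𝕜‖ ^ 2 = ‖x‖ ^ 2 := by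
  have hspan := he.linearIndependent.span_eq_top_of_card_eq_finrank' hcard
  simpa using (OrthonormalBasis.mk he hspan.ge).sum_sq_norm_inner_right x

theorem sum_sq_norm_inner_of_orthogonal_of_card_eq_finrank [DecidableEq ι] {v : ι → E} {c : ℝ}
    (hc : 0 < c) (hv : ∀ i j, ⟪v i, v j⟫_𝕜 = if i = j then (c : 𝕜) else 0)
    (hcard : Fintype.card ι = Module.finrank 𝕜 E) (x : E) :
    ∑ i, ‖⟪v i, x⟫_𝕜‖ ^ 2 = c * ‖x‖ ^ 2 := by
  set s : ℝ := (√c)⁻¹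
  have hs : s ^ 2 * c = 1 := by
    rw [inv_pow, Real.sq_sqrt hc.le, inv_mul_cancel₀ hc.ne']
  have he : Orthonormal 𝕜 fun i => (s : 𝕜) • v i := by
    rw [orthonormal_iff_ite]
    intro i j
    rw [inner_smul_real_left, inner_smul_real_right, hv]
    split_ifs
    · simp only [RCLike.real_smul_eq_coe_mul, ← mul_assoc]; norm_cast; rw [← sq, hs]
    · simp
  rw [← he.sum_sq_norm_inner_of_card_eq_finrank hcard x, Finset.mul_sum]
  refine Finset.sum_congr rfl fun i _ => ?_
  rw [inner_smul_real_left, norm_smul, mul_pow, Real.norm_eq_abs, sq_abs, ← mul_assoc,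
    mul_comm c, hs, one_mul]

end Parseval

theorem Real.sum_sqrt_le_sqrt_card_mul_sum {ι : Type*} (s : Finset ι) {f : ι → ℝ}
    (hf : ∀ i, 0 ≤ f i) : ∑ i ∈ s, √(f i) ≤ √(s.card * ∑ i ∈ s, f i) := by
  simpa [Real.sqrt_mul'] using Real.sum_sqrt_mul_sqrt_le s (fun _ => zero_le_one) hf

theorem two_div_mul_sqrt_eq {x : ℝ} (hx : 1 < x) :
    2 / (x ^ 2 - 1) * √((x ^ 2 - 1) * (x ^ 2 - x)) = 2 * √(x / (x + 1)) := by
  have hx2 : 0 < x ^ 2 - 1 := by nlinarith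
  have h : (x ^ 2 - 1) * (x ^ 2 - x) = (x ^ 2 - 1) ^ 2 * (x / (x + 1)) := by
    field_simp
    ring
  rw [h, Real.sqrt_mul (by positivity), Real.sqrt_sq hx2.le]
  field_simp

theorem EuclideanSpace.norm_toLp_eq_one {𝕜 n : Type*} [RCLike 𝕜] [Fintype n] {ψ : n → 𝕜}
    (hψ : star ψ ⬝ᵥ ψ = 1) : ‖WithLp.toLp 2 ψ‖ = 1 := by
  have h : ‖WithLp.toLp 2 ψ‖ ^ 2 = 1 := by
    rw [@norm_sq_eq_re_inner 𝕜, inner_toLp_toLp, dotProduct_comm, hψ, RCLike.one_re]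
  exact (pow_eq_one_iff_of_nonneg (norm_nonneg _) two_ne_zero).mp h

namespace Matrix
variable {𝕜 m n : Type*} [RCLike 𝕜] [Fintype m] [Fintype n]

def toHilbertSchmidt (A : Matrix m n 𝕜) : EuclideanSpace 𝕜 (m × n) :=
  WithLp.toLp 2 (Function.uncurry A)

theorem inner_toHilbertSchmidt (A B : Matrix m n 𝕜) :
    ⟪A.toHilbertSchmidt, B.toHilbertSchmidt⟫_𝕜 = (Aᴴ * B).trace := by
  simp only [toHilbertSchmidt, EuclideanSpace.inner_toLp_toLp, dotProduct, Fintype.sum_prod_type,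
    trace, diag, mul_apply, conjTranspose_apply, Pi.star_apply]
  rw [Finset.sum_comm]
  simp only [mul_comm]
  rfl

theorem trace_conjTranspose_mul_vecMulVec_star (M : Matrix n n 𝕜) (ψ : n → 𝕜) :
    (Mᴴ * vecMulVec ψ (star ψ)).trace = star (star ψ ⬝ᵥ M *ᵥ ψ) := by
  rw [mul_vecMulVec, trace_vecMulVec, star_dotProduct, star_star, dotProduct_comm,
    star_mulVec, dotProduct_mulVec]

theorem norm_star_dotProduct_mulVec_le_one [DecidableEq n] {W : Matrix n n 𝕜} (hW : Wᴴ * W = 1)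
    {ψ : n → 𝕜} (hψ : star ψ ⬝ᵥ ψ = 1) : ‖star ψ ⬝ᵥ W *ᵥ ψ‖ ≤ 1 := by
  have hWψ : star (W *ᵥ ψ) ⬝ᵥ W *ᵥ ψ = 1 := by
    rw [star_mulVec, ← dotProduct_mulVec, mulVec_mulVec, hW, one_mulVec, hψ]
  calc ‖star ψ ⬝ᵥ W *ᵥ ψ‖ = ‖⟪WithLp.toLp 2 ψ, WithLp.toLp 2 (W *ᵥ ψ)⟫_𝕜‖ := by
        rw [EuclideanSpace.inner_toLp_toLp, dotProduct_comm]
    _ ≤ ‖WithLp.toLp 2 ψ‖ * ‖WithLp.toLp 2 (W *ᵥ ψ)‖ := norm_inner_le_norm _ _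
    _ = 1 := by rw [EuclideanSpace.norm_toLp_eq_one hψ,
      EuclideanSpace.norm_toLp_eq_one hWψ, one_mul]

theorem sum_sq_norm_star_dotProduct_mulVec_eq [DecidableEq n] {ι : Type*} [Fintype ι]
    [DecidableEq ι] (W : ι → Matrix n n 𝕜) (hWunit : ∀ j, (W j)ᴴ * W j = 1)
    (hWtr : ∀ j, (W j).trace = 0) (hWorth : ∀ j k, j ≠ k → ((W j)ᴴ * W k).trace = 0)
    (hcard : Fintype.card ι + 1 = Fintype.card n ^ 2) {ψ : n → 𝕜} (hψ : star ψ ⬝ᵥ ψ = 1) :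
    ∑ j, ‖star ψ ⬝ᵥ W j *ᵥ ψ‖ ^ 2 = Fintype.card n - 1 := by
  set M : Option ι → Matrix n n 𝕜 := fun o => o.elim 1 W
  have hn : 0 < Fintype.card n := Nat.pos_of_ne_zero fun h => by simp [h] at hcard
  have horth : ∀ o o', ⟪(M o).toHilbertSchmidt, (M o').toHilbertSchmidt⟫_𝕜 =
      if o = o' then ((Fintype.card n : ℝ) : 𝕜) else 0 := by
    rintro (_ | j) (_ | k) <;> simp only [M, inner_toHilbertSchmidt, Option.elim] <;> simp [hWtr]
    split_ifs with hjk
    · simp [hjk, hWunit]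
    · exact hWorth j k hjk
  have hdim : Fintype.card (Option ι) = Module.finrank 𝕜 (EuclideanSpace 𝕜 (n × n)) := by
    simp [hcard, sq]
  have hx : ‖(vecMulVec ψ (star ψ)).toHilbertSchmidt‖ ^ 2 = 1 := by
    rw [@norm_sq_eq_re_inner 𝕜, inner_toHilbertSchmidt, trace_conjTranspose_mul_vecMulVec_star]
    simp [vecMulVec_mulVec, hψ]
  have hparseval := sum_sq_norm_inner_of_orthogonal_of_card_eq_finrank (by exact_mod_cast hn)
    horth hdim (vecMulVec ψ (star ψ)).toHilbertSchmidt
  simp only [Fintype.sum_option, inner_toHilbertSchmidt, trace_conjTranspose_mul_vecMulVec_star,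
    norm_star, M, Option.elim, one_mulVec, hψ, norm_one, hx] at hparseval
  linarith

end Matrix

/-- the NE-norm bound for the channels flagged by traceless unitaries:
`(2/(d²-1)) ∑ⱼ √(1 - |⟨ψ, Wⱼ ψ⟩|²) ≤ 2 √(d/(d+1))`. -/
theorem ne_norm_bound_for_unitary_flagged_channels
    (d : ℕ) (hd : 2 ≤ d) (W : Fin (d ^ 2 - 1) → Matrix (Fin d) (Fin d) ℂ)
    (hWunit : ∀ j, (W j)ᴴ * W j = 1)
    (hWtr : ∀ j, (W j).trace = 0)
    (hWorth : ∀ j k, j ≠ k → ((W j)ᴴ * W k).trace = 0)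
    (ψ : Fin d → ℂ) (hψ : star ψ ⬝ᵥ ψ = 1) :
    2 / ((d : ℝ) ^ 2 - 1) *
        ∑ j, Real.sqrt (1 - ‖star ψ ⬝ᵥ (W j).mulVec ψ‖ ^ 2)
      ≤ 2 * Real.sqrt ((d : ℝ) / ((d : ℝ) + 1)) := by
  have hd1 : 1 ≤ d ^ 2 := Nat.one_le_pow _ _ (by omega)
  have hsum : ∑ j, ‖star ψ ⬝ᵥ W j *ᵥ ψ‖ ^ 2 = (d : ℝ) - 1 := by
    simpa using sum_sq_norm_star_dotProduct_mulVec_eq W hWunit hWtr hWorth (by simp; omega) hψ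
  have hle : ∀ j, 0 ≤ 1 - ‖star ψ ⬝ᵥ W j *ᵥ ψ‖ ^ 2 := fun j =>
    sub_nonneg.2 (pow_le_one₀ (norm_nonneg _) (norm_star_dotProduct_mulVec_le_one (hWunit j) hψ))
  calc 2 / ((d : ℝ) ^ 2 - 1) * ∑ j, √(1 - ‖star ψ ⬝ᵥ W j *ᵥ ψ‖ ^ 2)
      ≤ 2 / ((d : ℝ) ^ 2 - 1) * √(((d : ℝ) ^ 2 - 1) * ((d : ℝ) ^ 2 - d)) := by
        have hd2 : (1 : ℝ) ≤ (d : ℝ) ^ 2 := by exact_mod_cast hd1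
        refine mul_le_mul_of_nonneg_left ?_ (div_nonneg zero_le_two (sub_nonneg.2 hd2))
        refine (Real.sum_sqrt_le_sqrt_card_mul_sum Finset.univ hle).trans_eq ?_
        rw [Finset.sum_sub_distrib, hsum]
        simp [Nat.cast_sub hd1]
    _ = 2 * √((d : ℝ) / (d + 1)) := two_div_mul_sqrt_eq (by exact_mod_cast hd)
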